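/- Let k < l be natural numbers, let m ∈ {k, …, l−1} minimize m' ↦ T_opt(k, m') + T(m', l) over {k, …, l−1}, and let S' ⊆ {k+1, …, m−1} be a finite set with chainSum T ({k} ∪ S' ∪ {m}) = T_opt(k, m). Then the set S'' := S' ∪ ({m} \ {k}) satisfies S'' ⊆ {k+1, …, l−1} and chainSum T ({k} ∪ S'' ∪ {l}) = T_opt(k, l); that is, the recursive construction of Algorithm 1 produces a merge pattern attaining the optimal latency T_opt(k, l). -/

import Mathlib

noncomputable section

/-- Chain sum of `f` over the consecutive pairs of the elements of `P` in increasing order. -/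
def chainSum (f : ℕ → ℕ → ℝ) (P : Finset ℕ) : ℝ :=
  (List.zipWith f (P.sort (· ≤ ·)) (P.sort (· ≤ ·)).tail).sum

/-- Optimal latency `T_opt(k,l)`: the minimum of `chainSum T ({k} ∪ S ∪ {l})`
over all finite sets `S ⊆ {k+1,…,l−1}`. -/
def Topt (T : ℕ → ℕ → ℝ) (k l : ℕ) : ℝ :=
  ((Finset.Ioo k l).powerset.image (fun S => chainSum T ({k} ∪ S ∪ {l}))).min'
    ((Finset.powerset_nonempty _).image _)

/-!
Optimal substructure. Appending `l` to a chain whose largest element is `m < l` adds exactly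
`T m l` to its chain sum. Hence every chain from `k` to `l` costs at least `T_opt(k, m) + T(m, l)`,
where `m` is its second-to-last element, and the chain built from an optimal chain to the
minimizing `m` attains that bound.
-/

open Finset

theorem List.sum_zipWith_tail_append_singleton {α M : Type*} [AddCommMonoid M]
    (f : α → α → M) (b : α) : ∀ (L : List α) (hL : L ≠ []),
      (zipWith f (L ++ [b]) (L ++ [b]).tail).sum = (zipWith f L L.tail).sum + f (L.getLast hL) b
  | [a], _ => by simp
  | a :: c :: L, _ => by
    have ih := sum_zipWith_tail_append_singleton f b (c :: L) (cons_ne_nil c L)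
    simp only [cons_append, tail_cons, zipWith_cons_cons, sum_cons, getLast_cons_cons] at ih ⊢
    rw [ih, add_assoc]

theorem Finset.sort_union_singleton_of_forall_lt {α : Type*} [LinearOrder α]
    {P : Finset α} {l : α} (hl : ∀ x ∈ P, x < l) :
    (P ∪ {l}).sort (· ≤ ·) = P.sort (· ≤ ·) ++ [l] := by
  have hnodup : (P.sort (· ≤ ·) ++ [l]).Nodup :=
    List.nodup_append.mpr ⟨P.sort_nodup _, List.nodup_singleton l, by
      simpa using fun x hx => (hl x hx).ne⟩
  have hsorted : (P.sort (· ≤ ·) ++ [l]).Pairwise (· ≤ ·) :=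
    List.pairwise_append.mpr ⟨P.pairwise_sort _, List.pairwise_singleton _ l, by
      simpa using fun x hx => (hl x hx).le⟩
  simpa using (List.toFinset_sort (· ≤ ·) hnodup).mpr hsorted

theorem chainSum_union_singleton (f : ℕ → ℕ → ℝ) {P : Finset ℕ} {m l : ℕ}
    (hm : IsGreatest (P : Set ℕ) m) (hl : m < l) :
    chainSum f (P ∪ {l}) = chainSum f P + f m l := by
  have hP : P.Nonempty := ⟨m, hm.1⟩
  have hsort : P.sort (· ≤ ·) ≠ [] := by
    rw [Ne, ← List.length_eq_zero_iff, length_sort]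
    exact hP.card_pos.ne'
  have hlast : (P.sort (· ≤ ·)).getLast hsort = m := by
    rw [List.getLast_eq_getElem, ← max'_eq_sorted_last (h := hP),
      (isGreatest_max' P hP).unique hm]
  rw [chainSum, chainSum, sort_union_singleton_of_forall_lt fun x hx => (hm.2 hx).trans_lt hl,
    List.sum_zipWith_tail_append_singleton f l _ hsort, hlast]

theorem Topt_le (T : ℕ → ℕ → ℝ) {k l : ℕ} {S : Finset ℕ} (hS : S ⊆ Ioo k l) :
    Topt T k l ≤ chainSum T ({k} ∪ S ∪ {l}) :=
  min'_le _ _ (mem_image_of_mem _ (mem_powerset.mpr hS))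

theorem Topt_le_chainSum_of_isGreatest (T : ℕ → ℕ → ℝ) {k m : ℕ} {S : Finset ℕ}
    (hS : ∀ x ∈ S, k < x) (hm : IsGreatest (↑({k} ∪ S) : Set ℕ) m) :
    Topt T k m ≤ chainSum T ({k} ∪ S) := by
  have hsplit : {k} ∪ S = {k} ∪ S.erase m ∪ {m} := by
    have := hm.1
    ext x
    simp only [mem_union, mem_singleton, mem_erase, coe_union] at this ⊢
    grind
  have hinner : S.erase m ⊆ Ioo k m := fun x hx =>
    mem_Ioo.mpr ⟨hS x (mem_of_mem_erase hx),
      (hm.2 (by simp [mem_of_mem_erase hx])).lt_of_ne (ne_of_mem_erase hx)⟩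
  rw [hsplit]
  exact Topt_le T hinner

theorem le_Topt (T : ℕ → ℕ → ℝ) {k l : ℕ} {c : ℝ} (hkl : k < l)
    (h : ∀ m ∈ Ico k l, c ≤ Topt T k m + T m l) : c ≤ Topt T k l := by
  refine le_min' _ _ _ fun v hv => ?_
  obtain ⟨S, hS, rfl⟩ := mem_image.mp hv
  have hS : S ⊆ Ioo k l := mem_powerset.mp hS
  have hne : ({k} ∪ S).Nonempty := ⟨k, by simp⟩
  set m := ({k} ∪ S).max' hne
  have hgreat : IsGreatest (↑({k} ∪ S) : Set ℕ) m := isGreatest_max' _ hne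
  have hm : m ∈ Ico k l := by
    refine mem_Ico.mpr ⟨hgreat.2 (by simp), ?_⟩
    rcases mem_union.mp hgreat.1 with hmk | hmS
    · exact (mem_singleton.mp hmk).trans_lt hkl
    · exact (mem_Ioo.mp (hS hmS)).2
  calc c ≤ Topt T k m + T m l := h m hm
    _ ≤ chainSum T ({k} ∪ S) + T m l := by
      gcongr
      exact Topt_le_chainSum_of_isGreatest T (fun x hx => (mem_Ioo.mp (hS hx)).1) hgreat
    _ = chainSum T ({k} ∪ S ∪ {l}) := (chainSum_union_singleton T hgreat (mem_Ico.mp hm).2).symm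

/-- The recursive construction of Algorithm 1 produces a merge pattern attaining the
optimal latency `T_opt(k,l)`. -/
theorem algorithm1_attains_Topt (T : ℕ → ℕ → ℝ) (k l m : ℕ) (hkl : k < l)
    (hm : m ∈ Finset.Ico k l)
    (hmin : ∀ m' ∈ Finset.Ico k l, Topt T k m + T m l ≤ Topt T k m' + T m' l)
    (S' : Finset ℕ) (hS' : S' ⊆ Finset.Ioo k m)
    (hval : chainSum T ({k} ∪ S' ∪ {m}) = Topt T k m) :
    S' ∪ ({m} \ {k}) ⊆ Finset.Ioo k l ∧
    chainSum T ({k} ∪ (S' ∪ ({m} \ {k})) ∪ {l}) = Topt T k l := by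
  obtain ⟨hkm, hml⟩ := mem_Ico.mp hm
  have hS'_lt : ∀ x ∈ S', k < x ∧ x < m := fun x hx => mem_Ioo.mp (hS' hx)
  have hsub : S' ∪ ({m} \ {k}) ⊆ Ioo k l := by
    intro x hx
    simp only [mem_union, mem_sdiff, mem_singleton, mem_Ioo] at hx ⊢
    grind
  have hunion : {k} ∪ (S' ∪ ({m} \ {k})) = {k} ∪ S' ∪ {m} := by
    ext x
    simp only [mem_union, mem_sdiff, mem_singleton]
    grind
  have hgreat : IsGreatest (↑({k} ∪ S' ∪ {m}) : Set ℕ) m := by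
    refine ⟨by simp, fun x hx => ?_⟩
    simp only [coe_union, coe_singleton, Set.mem_union, Set.mem_singleton_iff, mem_coe] at hx
    grind
  have hchain : chainSum T ({k} ∪ (S' ∪ ({m} \ {k})) ∪ {l}) = Topt T k m + T m l := by
    rw [hunion, chainSum_union_singleton T hgreat hml, hval]
  refine ⟨hsub, ?_⟩
  rw [hchain]
  exact le_antisymm (le_Topt T hkl hmin) (hchain ▸ Topt_le T hsub)
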